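/- arXiv:1505.07903 — 2 statements merged into one kernel-verified Lean document; each statement's English description precedes it below -/
import Mathlib

section
/- Let C = (c_{jk}) be a real m×m matrix with c_{jk} ≤ 0 for all j ≠ k. Then all leading (successive) principal minors of C are positive if and only if every eigenvalue of C (i.e., every complex root of its characteristic polynomial) has positive real part. -/
/-- All leading (successive) principal minors of a square matrix are positive. -/
def LeadingMinorsPos {m : ℕ} (C : Matrix (Fin m) (Fin m) ℝ) : Prop :=
  ∀ (k : ℕ) (h : k ≤ m), 0 < ((C.submatrix (Fin.castLE h) (Fin.castLE h)).det)

/-!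
For a Z-matrix `A` both conditions are equivalent to the existence of a vector `x > 0` with
`A x > 0`.

* Given such an `x`, Gershgorin's theorem for the rescaled matrix `x⁻¹ A x`, whose rows are
  strictly diagonally dominant, puts every eigenvalue in the open right half-plane; in particular
  `det A ≠ 0`. Deforming `A` to its diagonal through Z-matrices that keep the same `x` shows
  `det A > 0`. Principal submatrices inherit the restriction of `x` as a witness, since the
  dropped off-diagonal terms are `≤ 0`.
* Conversely, leading minors `> 0` give such an `x` by induction on the size, through the Schur
  complement of the leading block.
* If all eigenvalues have positive real part, then for small `ε > 0` the matrix `T = 1 - ε A` is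
  entrywise nonnegative with spectral radius `< 1`. By Gelfand's formula some power has
  `‖T ^ N‖∞ < 1`, and then `x = ∑ k < N, T ^ k 1` satisfies `ε A x = 1 - T ^ N 1 > 0`.
-/

open Finset Filter Topology Module.End

lemma Complex.eventually_norm_one_sub_mul_lt_one {z : ℂ} (hz : 0 < z.re) :
    ∀ᶠ ε : ℝ in 𝓝[>] 0, ‖1 - ε * z‖ < 1 := by
  have hsmall : ∀ᶠ ε : ℝ in 𝓝 0, ε * normSq z < 2 * z.re :=
    ((continuous_mul_const (normSq z)).tendsto' 0 0 (zero_mul _)).eventually_lt_const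
      (by positivity)
  filter_upwards [nhdsWithin_le_nhds hsmall, self_mem_nhdsWithin] with ε hε (hε0 : 0 < ε)
  rw [← sq_lt_one_iff₀ (norm_nonneg _), Complex.sq_norm, Complex.normSq_apply]
  rw [Complex.normSq_apply] at hε
  simp only [sub_re, one_re, mul_re, ofReal_re, ofReal_im, zero_mul, sub_zero, sub_im, one_im,
    mul_im, add_zero, zero_sub, neg_mul_neg]
  nlinarith

lemma spectrum.eventually_norm_pow_lt_one {A : Type*} [NormedRing A] [NormedAlgebra ℂ A]
    [CompleteSpace A] {a : A} (ha : spectralRadius ℂ a < 1) : ∀ᶠ n : ℕ in atTop, ‖a ^ n‖ < 1 := by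
  filter_upwards [(pow_norm_pow_one_div_tendsto_nhds_spectralRadius a).eventually_lt_const ha,
    eventually_gt_atTop 0] with n hn hn0
  rwa [ENNReal.ofReal_lt_one, Real.rpow_lt_one_iff' (norm_nonneg _) (by positivity)] at hn

namespace Matrix

variable {ι : Type*}

lemma aeval_charpoly_eq_zero_iff_mem_spectrum {R L : Type*} [CommRing R] [Field L]
    [Algebra R L] [Fintype ι] [DecidableEq ι] (A : Matrix ι ι R) (z : L) :
    Polynomial.aeval z A.charpoly = 0 ↔ z ∈ spectrum L (A.map (algebraMap R L)) := by
  rw [mem_spectrum_iff_isRoot_charpoly, charpoly_map, Polynomial.IsRoot.def, Polynomial.eval_map,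
    Polynomial.aeval_def]

lemma mulVec_apply_eq_add_sum_erase {R : Type*} [NonUnitalNonAssocSemiring R] [Fintype ι]
    [DecidableEq ι] (A : Matrix ι ι R) (x : ι → R) (i : ι) :
    (A *ᵥ x) i = A i i * x i + ∑ j ∈ univ.erase i, A i j * x j := by
  rw [add_sum_erase _ (fun j => A i j * x j) (mem_univ i)]
  rfl

lemma mulVec_snoc_apply {R : Type*} [NonUnitalNonAssocSemiring R] {n : ℕ}
    (A : Matrix ι (Fin (n + 1)) R) (u : Fin n → R) (a : R) (i : ι) :
    (A *ᵥ Fin.snoc u a) i = ∑ j, A i (Fin.castSucc j) * u j + A i (Fin.last n) * a := by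
  simp [mulVec, dotProduct, Fin.sum_univ_castSucc]

lemma det_mul_apply_last_of_mulVec_eq_single {R : Type*} [CommRing R] {n : ℕ}
    (A : Matrix (Fin (n + 1)) (Fin (n + 1)) R) {v : Fin (n + 1) → R} {s : R}
    (h : A *ᵥ v = Pi.single (Fin.last n) s) :
    A.det * v (Fin.last n) = s * (A.submatrix Fin.castSucc Fin.castSucc).det := by
  have := congrFun (congrArg (adjugate A *ᵥ ·) h) (Fin.last n)
  simp only [mulVec_mulVec, adjugate_mul, smul_mulVec, one_mulVec] at this
  simpa [mulVec_single, adjugate_fin_succ_eq_det_submatrix, mul_comm] using this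

lemma exists_pos_mulVec_pos_of_mulVec_snoc_eq_single {n : ℕ}
    {A : Matrix (Fin (n + 1)) (Fin (n + 1)) ℝ} {y w : Fin n → ℝ} {s : ℝ} (hy : ∀ i, 0 < y i)
    (hAy : ∀ i, 0 < (A.submatrix Fin.castSucc Fin.castSucc *ᵥ y) i) (hw : ∀ i, 0 ≤ w i)
    (hAw : A *ᵥ Fin.snoc w 1 = Pi.single (Fin.last n) s) (hs : 0 < s) :
    ∃ x : Fin (n + 1) → ℝ, (∀ i, 0 < x i) ∧ ∀ i, 0 < (A *ᵥ x) i := by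
  set c := (A *ᵥ Fin.snoc y 0) (Fin.last n)
  set t := (|c| + 1) / s
  have ht : 0 < t := by positivity
  have hts : t * s = |c| + 1 := div_mul_cancel₀ _ hs.ne'
  refine ⟨t • Fin.snoc w 1 + Fin.snoc y 0, fun i => ?_, fun i => ?_⟩
  · refine Fin.lastCases ?_ (fun i => ?_) i
    · simpa using ht
    · simpa using add_pos_of_nonneg_of_pos (mul_nonneg ht.le (hw i)) (hy i)
  · rw [mulVec_add, mulVec_smul, hAw]
    refine Fin.lastCases ?_ (fun i => ?_) i
    · simp only [Pi.add_apply, Pi.smul_apply, Pi.single_eq_same, smul_eq_mul]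
      linarith [neg_abs_le c]
    · simp only [Pi.add_apply, Pi.smul_apply, Pi.single_eq_of_ne (Fin.castSucc_lt_last i).ne,
        smul_eq_mul, mul_zero, mulVec_snoc_apply, add_zero, zero_add]
      exact hAy i

lemma hasEigenvalue_toLin'_diagonal_conj {K : Type*} [Field K] [Fintype ι] [DecidableEq ι]
    {M : Matrix ι ι K} {d : ι → K} (hd : ∀ i, d i ≠ 0) {μ : K}
    (hμ : HasEigenvalue (toLin' M) μ) :
    HasEigenvalue (toLin' (of fun i j => (d i)⁻¹ * M i j * d j)) μ := by
  obtain ⟨v, hv, hv0⟩ := hμ.exists_hasEigenvector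
  rw [mem_eigenspace_iff, toLin'_apply] at hv
  refine hasEigenvalue_of_hasEigenvector (x := fun j => (d j)⁻¹ * v j) ⟨?_, ?_⟩
  · rw [mem_eigenspace_iff, toLin'_apply]
    ext i
    calc ∑ j, (d i)⁻¹ * M i j * d j * ((d j)⁻¹ * v j) = (d i)⁻¹ * (M *ᵥ v) i := by
          rw [mulVec, dotProduct, mul_sum]
          exact sum_congr rfl fun j _ => by field_simp [hd j]
      _ = μ * ((d i)⁻¹ * v i) := by rw [hv]; simp only [Pi.smul_apply, smul_eq_mul]; ring
  · contrapose! hv0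
    ext j
    simpa [hd j] using congrFun hv0 j

section linftyOpNorm

attribute [local instance] Matrix.linftyOpSeminormedAddCommGroup

lemma sum_norm_apply_le_linfty_opNorm {κ α : Type*} [Fintype ι] [Fintype κ]
    [SeminormedAddCommGroup α] (M : Matrix ι κ α) (i : ι) : ∑ j, ‖M i j‖ ≤ ‖M‖ := by
  rw [linfty_opNorm_def]
  simp_rw [← coe_nnnorm, ← NNReal.coe_sum, NNReal.coe_le_coe]
  exact le_sup (f := fun i => ∑ j, ‖M i j‖₊) (mem_univ i)

end linftyOpNorm

def IsZMatrix (A : Matrix ι ι ℝ) : Prop := ∀ i j, i ≠ j → A i j ≤ 0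

namespace IsZMatrix

variable {A : Matrix ι ι ℝ}

lemma submatrix (hA : A.IsZMatrix) {κ : Type*} {e : κ → ι} (he : Function.Injective e) :
    (A.submatrix e e).IsZMatrix :=
  fun _ _ hij => hA _ _ (he.ne hij)

variable [Fintype ι]

lemma mulVec_le_mul_diag (hA : A.IsZMatrix) {x : ι → ℝ} (hx : ∀ i, 0 ≤ x i) (i : ι) :
    (A *ᵥ x) i ≤ A i i * x i := by
  classical
  rw [mulVec_apply_eq_add_sum_erase, add_le_iff_nonpos_right]
  exact sum_nonpos fun j hj =>
    mul_nonpos_of_nonpos_of_nonneg (hA i j (ne_of_mem_erase hj).symm) (hx j)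

lemma pos_of_mulVec_pos (hA : A.IsZMatrix) {x : ι → ℝ} (hx : ∀ i, 0 ≤ x i)
    (hAx : ∀ i, 0 < (A *ᵥ x) i) (i : ι) : 0 < x i :=
  (hx i).lt_of_ne' fun h => by simpa [h] using (hAx i).trans_le (hA.mulVec_le_mul_diag hx i)

lemma diag_pos (hA : A.IsZMatrix) {x : ι → ℝ} (hx : ∀ i, 0 < x i)
    (hAx : ∀ i, 0 < (A *ᵥ x) i) (i : ι) : 0 < A i i :=
  pos_of_mul_pos_left ((hAx i).trans_le (hA.mulVec_le_mul_diag (fun j => (hx j).le) i))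
    (hx i).le

lemma nonneg_of_mulVec_nonneg (hA : A.IsZMatrix) {x : ι → ℝ} (hx : ∀ i, 0 < x i)
    (hAx : ∀ i, 0 < (A *ᵥ x) i) {w : ι → ℝ} (hAw : ∀ i, 0 ≤ (A *ᵥ w) i) (i : ι) :
    0 ≤ w i := by
  by_contra! hwi
  obtain ⟨k, -, hk⟩ := exists_min_image univ (fun j => w j / x j) ⟨i, mem_univ i⟩
  set r := w k / x k
  have hr : r < 0 := (hk i (mem_univ i)).trans_lt (div_neg_of_neg_of_pos hwi (hx i))
  have hu : ∀ j, 0 ≤ (w - r • x) j := fun j => by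
    simpa [sub_nonneg, ← le_div_iff₀ (hx j)] using hk j (mem_univ j)
  have huk : (w - r • x) k = 0 := by simp [r, div_mul_cancel₀ _ (hx k).ne']
  have h1 := hA.mulVec_le_mul_diag hu k
  rw [huk, mul_zero, mulVec_sub, mulVec_smul] at h1
  simp only [Pi.sub_apply, Pi.smul_apply, smul_eq_mul] at h1
  nlinarith [hAw k, hAx k]

lemma mulVec_submatrix_pos (hA : A.IsZMatrix) {κ : Type*} [Fintype κ] {e : κ → ι}
    (he : Function.Injective e) {x : ι → ℝ} (hx : ∀ i, 0 < x i) (hAx : ∀ i, 0 < (A *ᵥ x) i)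
    (k : κ) : 0 < (A.submatrix e e *ᵥ (x ∘ e)) k := by
  classical
  refine (hAx (e k)).trans_le ?_
  have hrest : ∑ j ∈ (univ.map ⟨e, he⟩)ᶜ, A (e k) j * x j ≤ 0 := by
    refine sum_nonpos fun j hj => mul_nonpos_of_nonpos_of_nonneg (hA _ _ ?_) (hx j).le
    rintro rfl
    simp at hj
  rw [mulVec, dotProduct, ← sum_compl_add_sum (univ.map ⟨e, he⟩), sum_map]
  exact add_le_of_nonpos_left hrest

variable [DecidableEq ι]

lemma re_pos_of_mem_spectrum (hA : A.IsZMatrix) {x : ι → ℝ} (hx : ∀ i, 0 < x i)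
    (hAx : ∀ i, 0 < (A *ᵥ x) i) {μ : ℂ} (hμ : μ ∈ spectrum ℂ (A.map (algebraMap ℝ ℂ))) :
    0 < μ.re := by
  rw [← spectrum_toLin', ← hasEigenvalue_iff_mem_spectrum] at hμ
  obtain ⟨k, hk⟩ := eigenvalue_mem_ball <| hasEigenvalue_toLin'_diagonal_conj
    (d := fun i => (x i : ℂ)) (fun i => Complex.ofReal_ne_zero.2 (hx i).ne') hμ
  simp only [mem_closedBall_iff_norm', of_apply, map_apply, Complex.coe_algebraMap,
    ← Complex.ofReal_inv, ← Complex.ofReal_mul, Complex.norm_real, Real.norm_eq_abs] at hk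
  have hxk := (hx k).ne'
  have hradius : ∑ j ∈ univ.erase k, |(x k)⁻¹ * A k j * x j| = A k k - (x k)⁻¹ * (A *ᵥ x) k :=
    calc ∑ j ∈ univ.erase k, |(x k)⁻¹ * A k j * x j|
        = ∑ j ∈ univ.erase k, -((x k)⁻¹ * (A k j * x j)) := sum_congr rfl fun j hj => by
          rw [abs_of_nonpos, mul_assoc]
          exact mul_nonpos_of_nonpos_of_nonneg (mul_nonpos_of_nonneg_of_nonpos
            (inv_nonneg.2 (hx k).le) (hA k j (ne_of_mem_erase hj).symm)) (hx j).le
      _ = A k k - (x k)⁻¹ * (A *ᵥ x) k := by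
          rw [mulVec_apply_eq_add_sum_erase, sum_neg_distrib, ← mul_sum]
          field_simp
          ring
  have hre := (Complex.re_le_norm _).trans (hk.trans hradius.le)
  rw [Complex.sub_re, Complex.ofReal_re, mul_comm, ← mul_assoc, mul_inv_cancel₀ hxk, one_mul]
    at hre
  nlinarith [mul_pos (inv_pos.2 (hx k)) (hAx k)]

lemma det_ne_zero (hA : A.IsZMatrix) {x : ι → ℝ} (hx : ∀ i, 0 < x i)
    (hAx : ∀ i, 0 < (A *ᵥ x) i) : A.det ≠ 0 := by
  have h0 : (0 : ℂ) ∉ spectrum ℂ (A.map (algebraMap ℝ ℂ)) :=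
    fun h => (hA.re_pos_of_mem_spectrum hx hAx h).false
  rw [spectrum.zero_mem_iff, not_not, isUnit_iff_isUnit_det, ← RingHom.mapMatrix_apply,
    ← RingHom.map_det, isUnit_iff_ne_zero] at h0
  exact (_root_.map_ne_zero _).1 h0

lemma det_pos (hA : A.IsZMatrix) {x : ι → ℝ} (hx : ∀ i, 0 < x i)
    (hAx : ∀ i, 0 < (A *ᵥ x) i) : 0 < A.det := by
  set F : ℝ → Matrix ι ι ℝ := fun θ => θ • A + (1 - θ) • diagonal fun i => A i i
  have hF : ∀ θ ∈ Set.Icc (0 : ℝ) 1, (F θ).IsZMatrix ∧ ∀ i, 0 < (F θ *ᵥ x) i := by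
    rintro θ ⟨hθ0, hθ1⟩
    refine ⟨fun i j hij => ?_, fun i => ?_⟩
    · simpa [F, hij] using mul_nonpos_of_nonneg_of_nonpos hθ0 (hA i j hij)
    · simp only [F, add_mulVec, smul_mulVec, mulVec_diagonal, Pi.add_apply, Pi.smul_apply,
        smul_eq_mul]
      rcases hθ1.lt_or_eq with hθ1 | rfl
      · exact add_pos_of_nonneg_of_pos (mul_nonneg hθ0 (hAx i).le)
          (mul_pos (sub_pos.2 hθ1) (mul_pos (hA.diag_pos hx hAx i) (hx i)))
      · simpa using hAx i
  have hcont : ContinuousOn (fun θ => (F θ).det) (Set.Icc 0 1) := by fun_prop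
  have h0 : 0 < (F 0).det := by
    simpa [F, det_diagonal] using prod_pos fun i _ => hA.diag_pos hx hAx i
  by_contra! h1
  obtain ⟨θ, hθ, hdet⟩ := intermediate_value_Icc' zero_le_one hcont
    ⟨by simpa [F] using h1, h0.le⟩
  exact (hF θ hθ).1.det_ne_zero hx (hF θ hθ).2 hdet

end IsZMatrix

section linftyOpNorm

attribute [local instance] Matrix.linftyOpNormedAddCommGroup Matrix.linftyOpNormedRing
  Matrix.linftyOpNormedAlgebra

variable [Fintype ι] [DecidableEq ι]

lemma exists_pos_one_sub_mulVec_pos_of_spectralRadius_lt_one {T : Matrix ι ι ℝ}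
    (hT : ∀ i j, 0 ≤ T i j) (hρ : spectralRadius ℂ (T.map (algebraMap ℝ ℂ)) < 1) :
    ∃ y : ι → ℝ, (∀ i, 0 < y i) ∧ ∀ i, 0 < ((1 - T) *ᵥ y) i := by
  obtain ⟨N, hN⟩ := (spectrum.eventually_norm_pow_lt_one hρ).exists
  have hrow : ∀ i, (T ^ N *ᵥ 1) i < 1 := fun i => calc
    (T ^ N *ᵥ 1) i = ∑ j, ‖(T.map (algebraMap ℝ ℂ) ^ N) i j‖ := by
      rw [← RingHom.mapMatrix_apply, ← map_pow]
      simp [mulVec, dotProduct, abs_of_nonneg (pow_apply_nonneg hT N i _)]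
    _ ≤ ‖T.map (algebraMap ℝ ℂ) ^ N‖ := sum_norm_apply_le_linfty_opNorm _ i
    _ < 1 := hN
  set y := (∑ k ∈ range N, T ^ k) *ᵥ 1
  have hTy : ∀ i, 0 < ((1 - T) *ᵥ y) i := fun i => by
    rw [mulVec_mulVec, mul_neg_geom_sum, sub_mulVec, one_mulVec, Pi.sub_apply, Pi.one_apply]
    exact sub_pos.2 (hrow i)
  have hZ : (1 - T).IsZMatrix := fun i j hij => by simpa [hij] using hT i j
  refine ⟨y, hZ.pos_of_mulVec_pos (fun i => ?_) hTy, hTy⟩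
  simp only [y, mulVec, dotProduct, sum_apply, Pi.one_apply, mul_one]
  exact sum_nonneg fun j _ => sum_nonneg fun k _ => pow_apply_nonneg hT k i j

theorem IsZMatrix.exists_pos_mulVec_pos_of_forall_re_pos {A : Matrix ι ι ℝ} (hA : A.IsZMatrix)
    (hre : ∀ z ∈ spectrum ℂ (A.map (algebraMap ℝ ℂ)), 0 < z.re) :
    ∃ x : ι → ℝ, (∀ i, 0 < x i) ∧ ∀ i, 0 < (A *ᵥ x) i := by
  cases isEmpty_or_nonempty ι
  · exact ⟨0, isEmptyElim, isEmptyElim⟩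
  obtain ⟨ε, hε, hdiag, hdisc⟩ : ∃ ε : ℝ, 0 < ε ∧ (∀ i, ε * A i i ≤ 1) ∧
      ∀ z ∈ spectrum ℂ (A.map (algebraMap ℝ ℂ)), ‖1 - ε * z‖ < 1 := by
    have hdiag : ∀ᶠ ε : ℝ in 𝓝[>] 0, ∀ i, ε * A i i ≤ 1 :=
      nhdsWithin_le_nhds <| eventually_all.2 fun i =>
        (((continuous_mul_const (A i i)).tendsto' 0 0 (zero_mul _)).eventually_lt_const
          one_pos).mono fun _ h => h.le
    obtain ⟨ε, ⟨hε, hd⟩, hz⟩ := ((eventually_mem_nhdsWithin.and hdiag).and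
      ((A.map (algebraMap ℝ ℂ)).finite_spectrum.eventually_all.2
        fun z hz => Complex.eventually_norm_one_sub_mul_lt_one (hre z hz))).exists
    exact ⟨ε, hε, hd, hz⟩
  set T : Matrix ι ι ℝ := 1 - ε • A
  have hT : ∀ i j, 0 ≤ T i j := by
    intro i j
    rcases eq_or_ne i j with rfl | hij
    · simpa [T] using hdiag i
    · simpa [T, hij] using mul_nonpos_of_nonneg_of_nonpos hε.le (hA i j hij)
  have hTc : T.map (algebraMap ℝ ℂ) = algebraMap ℂ _ 1 - (ε : ℂ) • A.map (algebraMap ℝ ℂ) := by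
    ext i j
    rcases eq_or_ne i j with rfl | hij <;> simp [T, *]
  have hρ : spectralRadius ℂ (T.map (algebraMap ℝ ℂ)) < 1 := by
    refine ENNReal.coe_one ▸ spectrum.spectralRadius_lt_of_forall_lt_of_nonempty
      (spectrum.nonempty _) fun w hw => ?_
    rw [hTc, ← spectrum.singleton_sub_eq, spectrum.smul_eq_smul _ _ (spectrum.nonempty _)] at hw
    obtain ⟨_, rfl, _, ⟨z, hz, rfl⟩, rfl⟩ := hw
    rw [← NNReal.coe_lt_coe, coe_nnnorm]
    exact hdisc z hz
  obtain ⟨y, hy, hTy⟩ := exists_pos_one_sub_mulVec_pos_of_spectralRadius_lt_one hT hρ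
  refine ⟨y, hy, fun i => pos_of_mul_pos_right ?_ hε.le⟩
  simpa [T, smul_mulVec] using hTy i

end linftyOpNorm

namespace IsZMatrix

variable {m : ℕ} {A : Matrix (Fin m) (Fin m) ℝ}

theorem leadingMinorsPos_of_mulVec_pos (hA : A.IsZMatrix) {x : Fin m → ℝ}
    (hx : ∀ i, 0 < x i) (hAx : ∀ i, 0 < (A *ᵥ x) i) : LeadingMinorsPos A := fun _ hk =>
  (hA.submatrix (Fin.castLE_injective hk)).det_pos (fun _ => hx _)
    (hA.mulVec_submatrix_pos (Fin.castLE_injective hk) hx hAx)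

theorem exists_pos_mulVec_pos_of_leadingMinorsPos (hA : A.IsZMatrix) (hM : LeadingMinorsPos A) :
    ∃ x : Fin m → ℝ, (∀ i, 0 < x i) ∧ ∀ i, 0 < (A *ᵥ x) i := by
  induction m with
  | zero => exact ⟨0, finZeroElim, finZeroElim⟩
  | succ n ih =>
    set D := A.submatrix Fin.castSucc Fin.castSucc
    have hD : D.IsZMatrix := hA.submatrix (Fin.castSucc_injective n)
    obtain ⟨y, hy, hDy⟩ := ih hD fun k hk => hM k (hk.trans n.le_succ)
    set b : Fin n → ℝ := fun i => A (Fin.castSucc i) (Fin.last n)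
    set w := D⁻¹ *ᵥ -b
    have hDw : D *ᵥ w = -b := by
      rw [mulVec_mulVec, mul_nonsing_inv _ (isUnit_iff_ne_zero.2 (hD.det_ne_zero hy hDy)),
        one_mulVec]
    have hw : ∀ i, 0 ≤ w i := hD.nonneg_of_mulVec_nonneg hy hDy fun i => by
      simpa [hDw, b] using hA _ _ (Fin.castSucc_lt_last i).ne
    -- `s` is the Schur complement of `D` in `A`
    set s := (A *ᵥ Fin.snoc w 1) (Fin.last n)
    have hAv : A *ᵥ Fin.snoc w 1 = Pi.single (Fin.last n) s := by
      ext i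
      refine Fin.lastCases (by simp [s]) (fun i => ?_) i
      rw [Pi.single_apply, if_neg (Fin.castSucc_lt_last i).ne, mulVec_snoc_apply, mul_one]
      exact add_eq_zero_iff_eq_neg.2 (congrFun hDw i)
    have hs : 0 < s := by
      have hdet := A.det_mul_apply_last_of_mulVec_eq_single hAv
      rw [Fin.snoc_last, mul_one] at hdet
      have hApos : 0 < A.det := by simpa using hM (n + 1) le_rfl
      exact (mul_pos_iff_of_pos_right (hM n n.le_succ)).1 (hdet ▸ hApos)
    exact exists_pos_mulVec_pos_of_mulVec_snoc_eq_single hy hDy hw hAv hs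

end IsZMatrix

end Matrix

theorem stmt11 (m : ℕ) (C : Matrix (Fin m) (Fin m) ℝ)
    (hoff : ∀ j k : Fin m, j ≠ k → C j k ≤ 0) :
    LeadingMinorsPos C ↔
      ∀ z : ℂ, Polynomial.aeval z (Matrix.charpoly C) = 0 → 0 < z.re := by
  have hC : C.IsZMatrix := hoff
  simp_rw [Matrix.aeval_charpoly_eq_zero_iff_mem_spectrum]
  constructor
  · intro hM
    obtain ⟨x, hx, hCx⟩ := hC.exists_pos_mulVec_pos_of_leadingMinorsPos hM
    exact fun z => hC.re_pos_of_mem_spectrum hx hCx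
  · intro hre
    obtain ⟨x, hx, hCx⟩ := hC.exists_pos_mulVec_pos_of_forall_re_pos hre
    exact hC.leadingMinorsPos_of_mulVec_pos hx hCx
end

section
/- Let A = (a_{ij}) be a real m×m matrix, let ξ_1,…,ξ_m > 0, and let α > 0 be such that for every j = 1,…,m: a_{jj} + Σ_{i≠j} (ξ_i/ξ_j)|a_{ij}| ≤ −α. Then every differentiable function w : [0,∞) → ℝ^m satisfying w'(t) = A w(t) for all t ≥ 0 satisfies Σ_{i=1}^m ξ_i|w_i(t)| ≤ e^{−αt} Σ_{i=1}^m ξ_i|w_i(0)| for all t ≥ 0. -/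
/-!
The weighted norm `V(t) = ∑ ξᵢ |wᵢ(t)|` is a Lyapunov function. For small `h ≥ 0` the Euler step
`v ↦ v + h • A v` is multiplication by `1 + h • A`, whose column sums in the weights `ξ` are
`ξⱼ (1 + h aⱼⱼ) + h ∑_{i ≠ j} ξᵢ |aᵢⱼ| ≤ (1 - h α) ξⱼ` once `1 + h aⱼⱼ ≥ 0`. Since the Euler step
agrees with `w (t + h)` up to `o(h)`, the upper right Dini derivative of `V` is at most `-α V`,
and Grönwall's inequality gives `V(t) ≤ e^{-α t} V(0)`.
-/

open Finset Filter Topology Set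
open scoped Matrix

section WeightedL1Norm

variable {ι : Type*} [Fintype ι] (ξ : ι → ℝ)

def weightedL1Norm (v : ι → ℝ) : ℝ := ∑ i, ξ i * |v i|

theorem continuous_weightedL1Norm : Continuous (weightedL1Norm ξ) := by
  unfold weightedL1Norm
  fun_prop

variable {ξ}

theorem weightedL1Norm_add_le (hξ : ∀ i, 0 ≤ ξ i) (u v : ι → ℝ) :
    weightedL1Norm ξ (u + v) ≤ weightedL1Norm ξ u + (∑ i, ξ i) * ‖v‖ := by
  rw [weightedL1Norm, weightedL1Norm, sum_mul, ← sum_add_distrib]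
  refine sum_le_sum fun i _ => ?_
  have hvi : |v i| ≤ ‖v‖ := by simpa only [Real.norm_eq_abs] using norm_le_pi_norm v i
  calc ξ i * |u i + v i| ≤ ξ i * (|u i| + ‖v‖) :=
        mul_le_mul_of_nonneg_left ((abs_add_le _ _).trans (by linarith)) (hξ i)
    _ = ξ i * |u i| + ξ i * ‖v‖ := mul_add _ _ _

theorem weightedL1Norm_mulVec_le (hξ : ∀ i, 0 ≤ ξ i) {B : Matrix ι ι ℝ} {c : ℝ}
    (hB : ∀ j, ∑ i, ξ i * |B i j| ≤ c * ξ j) (v : ι → ℝ) :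
    weightedL1Norm ξ (B *ᵥ v) ≤ c * weightedL1Norm ξ v := by
  calc weightedL1Norm ξ (B *ᵥ v) ≤ ∑ i, ξ i * ∑ j, |B i j| * |v j| := by
        refine sum_le_sum fun i _ => mul_le_mul_of_nonneg_left ?_ (hξ i)
        simpa only [Matrix.mulVec, dotProduct, abs_mul] using
          abs_sum_le_sum_abs (fun j => B i j * v j) univ
    _ = ∑ j, (∑ i, ξ i * |B i j|) * |v j| := by
        simp only [mul_sum, sum_mul, mul_assoc]
        exact sum_comm
    _ ≤ ∑ j, c * ξ j * |v j| :=
        sum_le_sum fun j _ => mul_le_mul_of_nonneg_right (hB j) (abs_nonneg _)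
    _ = c * weightedL1Norm ξ v := by simp only [weightedL1Norm, mul_sum, mul_assoc]

theorem weightedL1Norm_add_smul_mulVec_le [DecidableEq ι] (hξ : ∀ i, 0 ≤ ξ i)
    {A : Matrix ι ι ℝ} {μ : ℝ}
    (hA : ∀ j, ξ j * A j j + ∑ i ∈ univ.erase j, ξ i * |A i j| ≤ μ * ξ j)
    {h : ℝ} (hh : 0 ≤ h) (hdiag : ∀ j, 0 ≤ 1 + h * A j j) (v : ι → ℝ) :
    weightedL1Norm ξ (v + h • A *ᵥ v) ≤ (1 + h * μ) * weightedL1Norm ξ v := by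
  have hstep : v + h • A *ᵥ v = (1 + h • A) *ᵥ v := by
    rw [Matrix.add_mulVec, Matrix.one_mulVec, Matrix.smul_mulVec]
  rw [hstep]
  refine weightedL1Norm_mulVec_le hξ (fun j => ?_) v
  have hoff : ∀ i ∈ univ.erase j, ξ i * |(1 + h • A) i j| = h * (ξ i * |A i j|) := by
    intro i hi
    rw [Matrix.add_apply, Matrix.one_apply_ne (ne_of_mem_erase hi), Matrix.smul_apply,
      smul_eq_mul, zero_add, abs_mul, abs_of_nonneg hh]
    ring
  rw [← add_sum_erase _ _ (mem_univ j), sum_congr rfl hoff, ← mul_sum, Matrix.add_apply,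
    Matrix.one_apply_eq, Matrix.smul_apply, smul_eq_mul, abs_of_nonneg (hdiag j)]
  nlinarith [mul_le_mul_of_nonneg_left (hA j) hh]

end WeightedL1Norm

theorem eventually_inv_mul_sub_lt_of_hasDerivWithinAt {E : Type*} [NormedAddCommGroup E]
    [NormedSpace ℝ E] {N : E → ℝ} {K : ℝ} (hK : 0 ≤ K) (hN : ∀ a b, N (a + b) ≤ N a + K * ‖b‖)
    {f : ℝ → E} {f' : E} {t c r : ℝ} (hf : HasDerivWithinAt f f' (Ioi t) t)
    (hc : ∀ᶠ z in 𝓝[>] t, N (f t + (z - t) • f') ≤ N (f t) + (z - t) * c) (hr : c < r) :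
    ∀ᶠ z in 𝓝[>] t, (z - t)⁻¹ * (N (f z) - N (f t)) < r := by
  set ε := (r - c) / (K + 1)
  have hε : 0 < ε := div_pos (sub_pos.2 hr) (by linarith)
  have hKε : K * ε < r - c := by
    rw [mul_div_assoc', div_lt_iff₀ (by linarith)]
    nlinarith
  filter_upwards [(hasDerivWithinAt_iff_isLittleO.1 hf).def hε, hc, self_mem_nhdsWithin]
    with z hrem hcz (hzt : t < z)
  have hpos : 0 < z - t := sub_pos.2 hzt
  rw [Real.norm_eq_abs, abs_of_pos hpos] at hrem
  have hsplit := hN (f t + (z - t) • f') (f z - f t - (z - t) • f')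
  rw [show f t + (z - t) • f' + (f z - f t - (z - t) • f') = f z by abel] at hsplit
  rw [inv_mul_lt_iff₀ hpos]
  nlinarith [mul_le_mul_of_nonneg_left hrem hK]

theorem eventually_inv_mul_sub_weightedL1Norm_lt {ι : Type*} [Fintype ι] [DecidableEq ι]
    {ξ : ι → ℝ} (hξ : ∀ i, 0 ≤ ξ i) {A : Matrix ι ι ℝ} {μ : ℝ}
    (hA : ∀ j, ξ j * A j j + ∑ i ∈ univ.erase j, ξ i * |A i j| ≤ μ * ξ j)
    {w : ℝ → ι → ℝ} {t r : ℝ} (hw : HasDerivAt w (A *ᵥ w t) t)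
    (hr : μ * weightedL1Norm ξ (w t) < r) :
    ∀ᶠ z in 𝓝[>] t, (z - t)⁻¹ * (weightedL1Norm ξ (w z) - weightedL1Norm ξ (w t)) < r := by
  refine eventually_inv_mul_sub_lt_of_hasDerivWithinAt (sum_nonneg fun i _ => hξ i)
    (weightedL1Norm_add_le hξ) hw.hasDerivWithinAt ?_ hr
  have hdiag : ∀ᶠ z in 𝓝 t, ∀ j, 0 < 1 + (z - t) * A j j := by
    refine eventually_all.2 fun j => ?_
    have hlim : Tendsto (fun z => 1 + (z - t) * A j j) (𝓝 t) (𝓝 1) :=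
      Continuous.tendsto' (by fun_prop) t 1 (by simp)
    exact hlim.eventually (eventually_gt_nhds one_pos)
  filter_upwards [nhdsWithin_le_nhds hdiag, self_mem_nhdsWithin] with z hz (hzt : t < z)
  calc weightedL1Norm ξ (w t + (z - t) • A *ᵥ w t)
      ≤ (1 + (z - t) * μ) * weightedL1Norm ξ (w t) :=
        weightedL1Norm_add_smul_mulVec_le hξ hA (sub_pos.2 hzt).le (fun j => (hz j).le) _
    _ = _ := by ring

theorem stmt14_general (m : ℕ) (A : Matrix (Fin m) (Fin m) ℝ)
    (ξ : Fin m → ℝ) (hξ : ∀ i, 0 < ξ i) (α : ℝ)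
    (hA : ∀ j : Fin m,
      A j j + (∑ i ∈ Finset.univ.erase j, (ξ i / ξ j) * |A i j|) ≤ -α)
    (w : ℝ → Fin m → ℝ)
    (hw : ∀ t : ℝ, 0 ≤ t → HasDerivAt w (A.mulVec (w t)) t) :
    ∀ t : ℝ, 0 ≤ t →
      (∑ i, ξ i * |w t i|) ≤ Real.exp (-α * t) * ∑ i, ξ i * |w 0 i| := by
  intro T hT
  have hcol : ∀ j, ξ j * A j j + ∑ i ∈ univ.erase j, ξ i * |A i j| ≤ -α * ξ j := fun j => by
    have hξj := (hξ j).ne'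
    have := mul_le_mul_of_nonneg_left (hA j) (hξ j).le
    simp only [mul_add, mul_sum, ← mul_assoc, mul_div_cancel₀ _ hξj] at this
    linarith
  have hcont : ContinuousOn (fun s => weightedL1Norm ξ (w s)) (Icc 0 T) := fun s hs =>
    ((continuous_weightedL1Norm ξ).continuousAt.comp (hw s hs.1).continuousAt).continuousWithinAt
  have hdecay := le_gronwallBound_of_liminf_deriv_right_le (ε := 0) hcont
    (fun s hs r hr =>
      (eventually_inv_mul_sub_weightedL1Norm_lt (fun i => (hξ i).le) hcol (hw s hs.1) hr).frequently)
    le_rfl (fun s _ => (add_zero _).ge) T ⟨hT, le_rfl⟩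
  rwa [gronwallBound_ε0, sub_zero, mul_comm] at hdecay

theorem stmt14 (m : ℕ) (A : Matrix (Fin m) (Fin m) ℝ)
    (ξ : Fin m → ℝ) (hξ : ∀ i, 0 < ξ i) (α : ℝ) (hα : 0 < α)
    (hA : ∀ j : Fin m,
      A j j + (∑ i ∈ Finset.univ.erase j, (ξ i / ξ j) * |A i j|) ≤ -α)
    (w : ℝ → Fin m → ℝ)
    (hw : ∀ t : ℝ, 0 ≤ t → HasDerivAt w (A.mulVec (w t)) t) :
    ∀ t : ℝ, 0 ≤ t →
      (∑ i, ξ i * |w t i|) ≤ Real.exp (-α * t) * ∑ i, ξ i * |w 0 i| :=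
  stmt14_general m A ξ hξ α hA w hw
end
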